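/- arXiv:2207.13980 — 7 statements merged into one kernel-verified Lean document; each statement's English description precedes it below -/
import Mathlib

section
/- Let A be an associative algebra, M an A-bimodule, and (T₁, T₂) a compatible O-operator. Define products on M by u ⋆₁ v = T₁(u)·v + u·T₁(v) and u ⋆₂ v = T₂(u)·v + u·T₂(v). Then (M, ⋆₁, ⋆₂) is a compatible associative algebra; in particular ⋆₁ and ⋆₂ are both associative and satisfy (u ⋆₁ v) ⋆₂ w + (u ⋆₂ v) ⋆₁ w = u ⋆₂ (v ⋆₁ w) + u ⋆₁ (v ⋆₂ w). -/
/-! The compatibility condition says exactly that `T₁ + T₂` is again an `𝒪`-operator, and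
`⋆_{T₁ + T₂} = ⋆₁ + ⋆₂`. An `𝒪`-operator `T` makes `⋆_T` associative, since `T` turns `⋆_T` into
the product of `A`. Expanding the associativity of `⋆₁ + ⋆₂` by biadditivity and cancelling the
associativity of `⋆₁` and of `⋆₂` leaves the mixed identity. -/

open MulOpposite

def IsOOperator {k A M : Type*} [CommRing k] [Ring A] [Algebra k A]
    [AddCommGroup M] [Module k M] [Module A M] [Module Aᵐᵒᵖ M]
    (T : M →ₗ[k] A) : Prop :=
  ∀ u v : M, T u * T v = T (T u • v + op (T v) • u)

def OOperatorCompat {k A M : Type*} [CommRing k] [Ring A] [Algebra k A]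
    [AddCommGroup M] [Module k M] [Module A M] [Module Aᵐᵒᵖ M]
    (T₁ T₂ : M →ₗ[k] A) : Prop :=
  ∀ u v : M, T₁ u * T₂ v + T₂ u * T₁ v =
    T₁ (T₂ u • v + op (T₂ v) • u) + T₂ (T₁ u • v + op (T₁ v) • u)

/-- The product `u ⋆_T v = T u · v + u · T v` on `M` induced by `T`. -/
def oStar {k A M : Type*} [CommRing k] [Ring A] [Algebra k A]
    [AddCommGroup M] [Module k M] [Module A M] [Module Aᵐᵒᵖ M]
    (T : M →ₗ[k] A) (u v : M) : M :=
  T u • v + op (T v) • u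

section

variable {k A M : Type*} [CommRing k] [Ring A] [Algebra k A] [AddCommGroup M] [Module k M]
  [Module A M] [Module Aᵐᵒᵖ M]

theorem oStar_add_operator (T₁ T₂ : M →ₗ[k] A) (u v : M) :
    oStar (T₁ + T₂) u v = oStar T₁ u v + oStar T₂ u v := by
  simp only [oStar, LinearMap.add_apply, add_smul, op_add]
  abel

theorem oStar_add_left (T : M →ₗ[k] A) (u v w : M) :
    oStar T (u + v) w = oStar T u w + oStar T v w := by
  simp only [oStar, map_add, add_smul, smul_add]
  abel

theorem oStar_add_right (T : M →ₗ[k] A) (u v w : M) :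
    oStar T u (v + w) = oStar T u v + oStar T u w := by
  simp only [oStar, map_add, op_add, add_smul, smul_add]
  abel

theorem IsOOperator.map_oStar {T : M →ₗ[k] A} (h : IsOOperator T) (u v : M) :
    T (oStar T u v) = T u * T v :=
  (h u v).symm

theorem IsOOperator.add {T₁ T₂ : M →ₗ[k] A} (h₁ : IsOOperator T₁) (h₂ : IsOOperator T₂)
    (hc : OOperatorCompat T₁ T₂) : IsOOperator (T₁ + T₂) := by
  intro u v
  change (T₁ + T₂) u * (T₁ + T₂) v = (T₁ + T₂) (oStar (T₁ + T₂) u v)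
  have hc' : T₁ (oStar T₂ u v) + T₂ (oStar T₁ u v) = T₁ u * T₂ v + T₂ u * T₁ v := (hc u v).symm
  simp only [oStar_add_operator, LinearMap.add_apply, map_add, h₁.map_oStar, h₂.map_oStar,
    add_mul, mul_add]
  linear_combination (norm := abel) -hc'

variable [SMulCommClass A Aᵐᵒᵖ M]

theorem IsOOperator.oStar_assoc {T : M →ₗ[k] A} (h : IsOOperator T) (u v w : M) :
    oStar T (oStar T u v) w = oStar T u (oStar T v w) := by
  rw [oStar.eq_1 T (oStar T u v), oStar.eq_1 T u (oStar T v w), h.map_oStar, h.map_oStar]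
  simp only [oStar, smul_add, mul_smul, op_mul, smul_comm (T u) (op (T w))]
  abel

theorem OOperatorCompat.oStar_compat {T₁ T₂ : M →ₗ[k] A} (h₁ : IsOOperator T₁)
    (h₂ : IsOOperator T₂) (hc : OOperatorCompat T₁ T₂) (u v w : M) :
    oStar T₂ (oStar T₁ u v) w + oStar T₁ (oStar T₂ u v) w =
      oStar T₂ u (oStar T₁ v w) + oStar T₁ u (oStar T₂ v w) := by
  have h := (h₁.add h₂ hc).oStar_assoc u v w
  simp only [oStar_add_operator, oStar_add_left, oStar_add_right] at h
  linear_combination (norm := abel) h - h₁.oStar_assoc u v w - h₂.oStar_assoc u v w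

end

/-- a compatible `𝒪`-operator `(T₁, T₂)` makes `(M, ⋆₁, ⋆₂)` a compatible
associative algebra. -/
theorem compatible_oOperator_induces_compatible_associative {k A M : Type*} [CommRing k]
    [Ring A] [Algebra k A] [AddCommGroup M] [Module k M] [Module A M] [Module Aᵐᵒᵖ M]
    [SMulCommClass A Aᵐᵒᵖ M]
    (T₁ T₂ : M →ₗ[k] A) (h₁ : IsOOperator T₁) (h₂ : IsOOperator T₂)
    (hc : OOperatorCompat T₁ T₂) :
    (∀ u v w : M, oStar T₁ (oStar T₁ u v) w = oStar T₁ u (oStar T₁ v w)) ∧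
    (∀ u v w : M, oStar T₂ (oStar T₂ u v) w = oStar T₂ u (oStar T₂ v w)) ∧
    (∀ u v w : M,
      oStar T₂ (oStar T₁ u v) w + oStar T₁ (oStar T₂ u v) w =
        oStar T₂ u (oStar T₁ v w) + oStar T₁ u (oStar T₂ v w)) :=
  ⟨h₁.oStar_assoc, h₂.oStar_assoc, hc.oStar_compat h₁ h₂⟩
end

section
/- Let (T₁, T₂) be a compatible O-operator on an A-bimodule M over an associative algebra A. Equip M with the compatible associative products ⋆₁, ⋆₂ where u ⋆ᵢ v = Tᵢ(u)·v + u·Tᵢ(v). Define l_{Tᵢ}(u, a) = Tᵢ(u)·a − Tᵢ(u·a) and r_{Tᵢ}(a, u) = a·Tᵢ(u) − Tᵢ(a·u). Then (A, l_{T₁}, r_{T₁}, l_{T₂}, r_{T₂}) is a compatible bimodule over the compatible associative algebra (M, ⋆₁, ⋆₂). -/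
/-!
An `𝒪`-operator `T` is multiplicative from `(M, ⋆_T)` to `A`, `T (u ⋆_T v) = T u * T v`; with
this and the `A`-bimodule laws of `M`, each bimodule identity for `(l_T, r_T)` reduces to
cancellations. Compatibility of `(T₁, T₂)` is precisely the cross term of the `𝒪`-operator
identity for `T₁ + T₂`, so `T₁ + T₂` is an `𝒪`-operator, and since `⋆_T`, `l_T`, `r_T` are additive
in `T`, the sum actions over `⋆₁ + ⋆₂` are the bimodule induced by `T₁ + T₂`.
-/

open MulOpposite

/-- The left action `l_T (u, a) = T u * a - T (u · a)` of `(M, ⋆_T)` on `A`. -/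
def oL {k A M : Type*} [CommRing k] [Ring A] [Algebra k A]
    [AddCommGroup M] [Module k M] [Module A M] [Module Aᵐᵒᵖ M]
    (T : M →ₗ[k] A) (u : M) (a : A) : A :=
  T u * a - T (op a • u)

/-- The right action `r_T (a, u) = a * T u - T (a · u)` of `(M, ⋆_T)` on `A`. -/
def oR {k A M : Type*} [CommRing k] [Ring A] [Algebra k A]
    [AddCommGroup M] [Module k M] [Module A M] [Module Aᵐᵒᵖ M]
    (T : M →ₗ[k] A) (a : A) (u : M) : A :=
  a * T u - T (a • u)

structure IsBimoduleOver {A M : Type*} (μ : M → M → M) (l : M → A → A) (r : A → M → A) :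
    Prop where
  left_mul : ∀ (u v : M) (a : A), l (μ u v) a = l u (l v a)
  left_right : ∀ (u v : M) (a : A), r (l u a) v = l u (r a v)
  right_mul : ∀ (u v : M) (a : A), r (r a u) v = r a (μ u v)

section OOperator

variable {k A M : Type*} [CommRing k] [Ring A] [Algebra k A]
    [AddCommGroup M] [Module k M] [Module A M] [Module Aᵐᵒᵖ M]

theorem oStar_add (T₁ T₂ : M →ₗ[k] A) :
    oStar (T₁ + T₂) = fun u v => oStar T₁ u v + oStar T₂ u v := by
  ext u v
  simp only [oStar, LinearMap.add_apply, add_smul, op_add]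
  abel

theorem oL_add (T₁ T₂ : M →ₗ[k] A) : oL (T₁ + T₂) = fun u a => oL T₁ u a + oL T₂ u a := by
  ext u a
  simp only [oL, LinearMap.add_apply, add_mul]
  abel

theorem oR_add (T₁ T₂ : M →ₗ[k] A) : oR (T₁ + T₂) = fun a u => oR T₁ a u + oR T₂ a u := by
  ext a u
  simp only [oR, LinearMap.add_apply, mul_add]
  abel

theorem IsOOperator.oR_oL {T : M →ₗ[k] A} (hT : IsOOperator T) (u v : M) (a : A) :
    oR T (oL T u a) v = oL T u (oR T a v) := by
  simp only [oL, oR, mul_sub, sub_mul]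
  rw [hT u (a • v), hT (op a • u) v]
  simp only [sub_smul, op_sub, map_add, map_sub, ← mul_smul, ← op_mul, mul_assoc]
  abel

variable [SMulCommClass A Aᵐᵒᵖ M] {T : M →ₗ[k] A}

theorem IsOOperator.oL_oStar (hT : IsOOperator T) (u v : M) (a : A) :
    oL T (oStar T u v) a = oL T u (oL T v a) := by
  simp only [oL, oStar, mul_sub]
  rw [← hT u v, hT u (op a • v)]
  simp only [smul_add, sub_smul, op_sub, map_add, map_sub, smul_comm (T u) (op a), ← mul_smul,
    ← op_mul, mul_assoc]
  abel

theorem IsOOperator.oR_oR (hT : IsOOperator T) (u v : M) (a : A) :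
    oR T (oR T a u) v = oR T a (oStar T u v) := by
  simp only [oR, oStar, sub_mul, mul_assoc]
  rw [hT u v, hT (a • u) v]
  simp only [smul_add, sub_smul, map_add, map_sub, smul_comm, ← mul_smul]
  abel

theorem IsOOperator.isBimoduleOver (hT : IsOOperator T) :
    IsBimoduleOver (oStar T) (oL T) (oR T) :=
  ⟨hT.oL_oStar, hT.oR_oL, hT.oR_oR⟩

end OOperator

/-- for a compatible `𝒪`-operator `(T₁, T₂)`, the quintuple
`(A, l_{T₁}, r_{T₁}, l_{T₂}, r_{T₂})` is a compatible bimodule over the compatible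
associative algebra `(M, ⋆₁, ⋆₂)`: `A` is a bimodule over `(M, ⋆ᵢ)` via `(l_{Tᵢ}, r_{Tᵢ})`
for `i = 1, 2`, and the sum actions form a bimodule over `(M, ⋆₁ + ⋆₂)`. -/
theorem compatible_oOperator_induces_compatible_bimodule {k A M : Type*} [CommRing k]
    [Ring A] [Algebra k A] [AddCommGroup M] [Module k M] [Module A M] [Module Aᵐᵒᵖ M]
    [SMulCommClass A Aᵐᵒᵖ M]
    (T₁ T₂ : M →ₗ[k] A) (h₁ : IsOOperator T₁) (h₂ : IsOOperator T₂)
    (hc : OOperatorCompat T₁ T₂) :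
    -- bimodule over (M, ⋆₁) via (l_{T₁}, r_{T₁})
    ((∀ (u v : M) (a : A), oL T₁ (oStar T₁ u v) a = oL T₁ u (oL T₁ v a)) ∧
     (∀ (u v : M) (a : A), oR T₁ (oL T₁ u a) v = oL T₁ u (oR T₁ a v)) ∧
     (∀ (u v : M) (a : A), oR T₁ (oR T₁ a u) v = oR T₁ a (oStar T₁ u v))) ∧
    -- bimodule over (M, ⋆₂) via (l_{T₂}, r_{T₂})
    ((∀ (u v : M) (a : A), oL T₂ (oStar T₂ u v) a = oL T₂ u (oL T₂ v a)) ∧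
     (∀ (u v : M) (a : A), oR T₂ (oL T₂ u a) v = oL T₂ u (oR T₂ a v)) ∧
     (∀ (u v : M) (a : A), oR T₂ (oR T₂ a u) v = oR T₂ a (oStar T₂ u v))) ∧
    -- the sum actions form a bimodule over (M, ⋆₁ + ⋆₂)
    ((∀ (u v : M) (a : A),
        oL T₁ (oStar T₁ u v + oStar T₂ u v) a + oL T₂ (oStar T₁ u v + oStar T₂ u v) a =
          oL T₁ u (oL T₁ v a + oL T₂ v a) + oL T₂ u (oL T₁ v a + oL T₂ v a)) ∧
     (∀ (u v : M) (a : A),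
        oR T₁ (oL T₁ u a + oL T₂ u a) v + oR T₂ (oL T₁ u a + oL T₂ u a) v =
          oL T₁ u (oR T₁ a v + oR T₂ a v) + oL T₂ u (oR T₁ a v + oR T₂ a v)) ∧
     (∀ (u v : M) (a : A),
        oR T₁ (oR T₁ a u + oR T₂ a u) v + oR T₂ (oR T₁ a u + oR T₂ a u) v =
          oR T₁ a (oStar T₁ u v + oStar T₂ u v) + oR T₂ a (oStar T₁ u v + oStar T₂ u v))) := by
  have hsum := (h₁.add h₂ hc).isBimoduleOver
  rw [oStar_add, oL_add, oR_add] at hsum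
  exact ⟨⟨h₁.oL_oStar, h₁.oR_oL, h₁.oR_oR⟩, ⟨h₂.oL_oStar, h₂.oR_oL, h₂.oR_oR⟩,
    ⟨hsum.left_mul, hsum.left_right, hsum.right_mul⟩⟩
end

section
/- Let A be an associative algebra and let r₁, r₂ ∈ A ⊗ A be a compatible associative Yang-Baxter solution. Define T₁(a) = Σ r₁^{[1]}·a·r₁^{[2]} and T₂(a) = Σ r₂^{[1]}·a·r₂^{[2]}. Then (T₁, T₂) is a compatible Rota-Baxter operator on A, i.e., T₁ and T₂ are Rota-Baxter operators and T₁(a)·T₂(b) + T₂(a)·T₁(b) = T₁(T₂(a)·b + a·T₂(b)) + T₂(T₁(a)·b + a·T₁(b)). -/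
open TensorProduct

variable (k A : Type*)

/-- `r ↦ r¹²`, i.e. `x ⊗ y ↦ x ⊗ y ⊗ 1` into `A ⊗ (A ⊗ A)`. -/
noncomputable def emb12 [CommRing k] [Ring A] [Algebra k A] :
    A ⊗[k] A →ₐ[k] A ⊗[k] (A ⊗[k] A) :=
  Algebra.TensorProduct.map (AlgHom.id k A) Algebra.TensorProduct.includeLeft

/-- `r ↦ r¹³`, i.e. `x ⊗ y ↦ x ⊗ 1 ⊗ y`. -/
noncomputable def emb13 [CommRing k] [Ring A] [Algebra k A] :
    A ⊗[k] A →ₐ[k] A ⊗[k] (A ⊗[k] A) :=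
  Algebra.TensorProduct.map (AlgHom.id k A) Algebra.TensorProduct.includeRight

/-- `r ↦ r²³`, i.e. `x ⊗ y ↦ 1 ⊗ x ⊗ y`. -/
noncomputable def emb23 [CommRing k] [Ring A] [Algebra k A] :
    A ⊗[k] A →ₐ[k] A ⊗[k] (A ⊗[k] A) :=
  Algebra.TensorProduct.includeRight

/-- `r` is an associative Yang-Baxter solution: `r¹³r¹² − r¹²r²³ + r²³r¹³ = 0`. -/
def IsAYBSolution [CommRing k] [Ring A] [Algebra k A] (r : A ⊗[k] A) : Prop :=
  emb13 k A r * emb12 k A r - emb12 k A r * emb23 k A r + emb23 k A r * emb13 k A r = 0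

/-- `(r₁, r₂)` satisfies the compatibility condition:
`r₁¹³r₂¹² + r₂¹³r₁¹² − r₁¹²r₂²³ − r₂¹²r₁²³ + r₁²³r₂¹³ + r₂²³r₁¹³ = 0`. -/
def AYBCompat [CommRing k] [Ring A] [Algebra k A] (r₁ r₂ : A ⊗[k] A) : Prop :=
  emb13 k A r₁ * emb12 k A r₂ + emb13 k A r₂ * emb12 k A r₁
    - emb12 k A r₁ * emb23 k A r₂ - emb12 k A r₂ * emb23 k A r₁
    + emb23 k A r₁ * emb13 k A r₂ + emb23 k A r₂ * emb13 k A r₁ = 0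

/-- The linear map `A → A`, `a ↦ Σ r^{[1]} * a * r^{[2]}` associated to `r ∈ A ⊗ A`. -/
noncomputable def aybToOperator [CommRing k] [Ring A] [Algebra k A] (r : A ⊗[k] A) :
    A →ₗ[k] A :=
  TensorProduct.lift
    (LinearMap.mk₂ k (fun x y => LinearMap.mulLeft k x ∘ₗ LinearMap.mulRight k y)
      (by intro x x' y; ext a; simp [add_mul])
      (by intro c x y; ext a; simp [smul_mul_assoc])
      (by intro x y y'; ext a; simp [mul_add])
      (by intro c x y; ext a; simp [mul_smul_comm])) r

/-!
Evaluating a three-fold tensor against `u ⊗ v ⊗ w ↦ u * a * v * b * w` sends `r¹³r¹²`, `r¹²r²³`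
and `r²³r¹³` to `T(T(a) * b)`, `T(a) * T(b)` and `T(a * T(b))`, where `T` is the operator of `r`;
so an associative Yang-Baxter solution gives a Rota-Baxter operator. Both compatibility
conditions are polarizations: given that `r₁`, `r₂` are solutions, `(r₁, r₂)` is compatible iff
`r₁ + r₂` is a solution, and given that `T₁`, `T₂` are Rota-Baxter, `(T₁, T₂)` is compatible iff
`T₁ + T₂` is Rota-Baxter. Since `r ↦ T` is additive, the compatible case follows.
-/

section RotaBaxter

variable {k A}
variable [CommRing k] [Ring A] [Algebra k A]

def IsRotaBaxter (T : A →ₗ[k] A) : Prop :=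
  ∀ a b : A, T a * T b = T (T a * b + a * T b)

theorem IsRotaBaxter.compat_of_add {T S : A →ₗ[k] A} (hT : IsRotaBaxter T)
    (hS : IsRotaBaxter S) (hTS : IsRotaBaxter (T + S)) (a b : A) :
    T a * S b + S a * T b = T (S a * b + a * S b) + S (T a * b + a * T b) := by
  have hT' := hT a b
  have hS' := hS a b
  have hTS' := hTS a b
  simp only [LinearMap.add_apply, map_add, add_mul, mul_add] at hT' hS' hTS' ⊢
  linear_combination (norm := abel) hTS' - hT' - hS'

end RotaBaxter

section AYB

variable [CommRing k] [Ring A] [Algebra k A]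

noncomputable def tripleEval (a b : A) : A ⊗[k] (A ⊗[k] A) →ₗ[k] A :=
  LinearMap.mul' k A ∘ₗ TensorProduct.map (LinearMap.mulRight k a)
    (LinearMap.mul' k A ∘ₗ TensorProduct.map (LinearMap.mulRight k b) LinearMap.id)

variable {k A}

@[simp] theorem tripleEval_tmul (a b u v w : A) :
    tripleEval k A a b (u ⊗ₜ (v ⊗ₜ w)) = u * a * v * b * w := by
  simp [tripleEval, mul_assoc]

@[simp] theorem aybToOperator_tmul (x y a : A) :
    aybToOperator k A (x ⊗ₜ[k] y) a = x * a * y := by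
  simp [aybToOperator, mul_assoc]

@[simp] theorem aybToOperator_zero : aybToOperator k A 0 = 0 :=
  map_zero _

@[simp] theorem aybToOperator_add (r r' : A ⊗[k] A) :
    aybToOperator k A (r + r') = aybToOperator k A r + aybToOperator k A r' :=
  map_add _ r r'

theorem tripleEval_emb13_mul_emb12 (a b : A) (r r' : A ⊗[k] A) :
    tripleEval k A a b (emb13 k A r * emb12 k A r') =
      aybToOperator k A r (aybToOperator k A r' a * b) := by
  induction r using TensorProduct.induction_on with
  | zero => simp
  | add s t hs ht => simp [add_mul, hs, ht]
  | tmul x y =>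
    induction r' using TensorProduct.induction_on with
    | zero => simp
    | add s t hs ht => simp [mul_add, add_mul, hs, ht]
    | tmul x' y' => simp [emb12, emb13, mul_assoc]

theorem tripleEval_emb12_mul_emb23 (a b : A) (r r' : A ⊗[k] A) :
    tripleEval k A a b (emb12 k A r * emb23 k A r') =
      aybToOperator k A r a * aybToOperator k A r' b := by
  induction r using TensorProduct.induction_on with
  | zero => simp
  | add s t hs ht => simp [add_mul, hs, ht]
  | tmul x y =>
    induction r' using TensorProduct.induction_on with
    | zero => simp
    | add s t hs ht => simp [mul_add, hs, ht]
    | tmul x' y' => simp [emb12, emb23, mul_assoc]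

theorem tripleEval_emb23_mul_emb13 (a b : A) (r r' : A ⊗[k] A) :
    tripleEval k A a b (emb23 k A r * emb13 k A r') =
      aybToOperator k A r' (a * aybToOperator k A r b) := by
  induction r using TensorProduct.induction_on with
  | zero => simp
  | add s t hs ht => simp [add_mul, mul_add, hs, ht]
  | tmul x y =>
    induction r' using TensorProduct.induction_on with
    | zero => simp
    | add s t hs ht => simp [mul_add, hs, ht]
    | tmul x' y' => simp [emb13, emb23, mul_assoc]

theorem isRotaBaxter_aybToOperator {r : A ⊗[k] A} (h : IsAYBSolution k A r) :
    IsRotaBaxter (aybToOperator k A r) := by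
  intro a b
  have h' := congrArg (tripleEval k A a b) h
  simp only [map_add, map_sub, map_zero, tripleEval_emb13_mul_emb12,
    tripleEval_emb12_mul_emb23, tripleEval_emb23_mul_emb13] at h'
  rw [map_add]
  linear_combination (norm := abel) -h'

theorem IsAYBSolution.add {r₁ r₂ : A ⊗[k] A} (h₁ : IsAYBSolution k A r₁)
    (h₂ : IsAYBSolution k A r₂) (hc : AYBCompat k A r₁ r₂) : IsAYBSolution k A (r₁ + r₂) := by
  unfold IsAYBSolution AYBCompat at *
  simp only [map_add]
  linear_combination (norm := noncomm_ring) h₁ + h₂ + hc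

end AYB

/-- a compatible associative Yang-Baxter solution `(r₁, r₂)` gives a
compatible Rota-Baxter operator `(T₁, T₂)` with `Tᵢ a = Σ rᵢ^{[1]} * a * rᵢ^{[2]}`. -/
theorem compatible_ayb_gives_compatible_rota_baxter [CommRing k] [Ring A] [Algebra k A]
    (r₁ r₂ : A ⊗[k] A) (h₁ : IsAYBSolution k A r₁) (h₂ : IsAYBSolution k A r₂)
    (hc : AYBCompat k A r₁ r₂) :
    (∀ a b : A, aybToOperator k A r₁ a * aybToOperator k A r₁ b =
        aybToOperator k A r₁ (aybToOperator k A r₁ a * b + a * aybToOperator k A r₁ b)) ∧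
    (∀ a b : A, aybToOperator k A r₂ a * aybToOperator k A r₂ b =
        aybToOperator k A r₂ (aybToOperator k A r₂ a * b + a * aybToOperator k A r₂ b)) ∧
    (∀ a b : A,
      aybToOperator k A r₁ a * aybToOperator k A r₂ b
          + aybToOperator k A r₂ a * aybToOperator k A r₁ b =
        aybToOperator k A r₁ (aybToOperator k A r₂ a * b + a * aybToOperator k A r₂ b)
          + aybToOperator k A r₂ (aybToOperator k A r₁ a * b + a * aybToOperator k A r₁ b)) := by
  have hT₁ := isRotaBaxter_aybToOperator h₁
  have hT₂ := isRotaBaxter_aybToOperator h₂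
  have hT₁₂ : IsRotaBaxter (aybToOperator k A r₁ + aybToOperator k A r₂) :=
    aybToOperator_add r₁ r₂ ▸ isRotaBaxter_aybToOperator (h₁.add h₂ hc)
  exact ⟨hT₁, hT₂, hT₁.compat_of_add hT₂ hT₁₂⟩
end

section
/- Let (g, [·,·]) be a graded Lie algebra concentrated in nonnegative degrees. Define g_c by (g_c)⁰ = g⁰ and (g_c)ⁿ = (gⁿ)^{n+1} (direct sum of n+1 copies of gⁿ) with bracket ⟦(x₁,…,x_{m+1}), (y₁,…,y_{n+1})⟧ whose i-th component (in degree m+n) is Σ_{j+k=i+1} [x_j, y_k]. Then (g_c, ⟦·,·⟧) is a graded Lie algebra (graded antisymmetry and graded Jacobi identity hold). -/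
/-!
The bracket of `g_c` is the truncated Cauchy product of the bracket of `g`, so the `i`-th
component of an iterated bracket `⟦x, ⟦y, z⟧⟧` is the sum of `[x_j, [y_a, z_b]]` over
`j + a + b = i`. After reindexing, the three cyclic terms of the Jacobi identity of `g_c` become
one triple sum whose summands vanish by the Jacobi identity of `g`; antisymmetry is proved the
same way with the double sum.
-/

/-- Transport of a homogeneous element along an equality of degrees. -/
def gcast {g : ℕ → Type*} {m n : ℕ} (h : m = n) (x : g m) : g n := h ▸ x

/-- The bracket on `g_c`: the degree-`m` part of `g_c` is `(g m)^{m+1}`, and the `i`-th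
component (0-indexed) of `⟦x, y⟧` is `∑_{j+l=i} [x_j, y_l]`. -/
def gcBracket {g : ℕ → Type*} [∀ n, AddCommGroup (g n)]
    (br : ∀ m n : ℕ, g m → g n → g (m + n)) {m n : ℕ}
    (x : Fin (m + 1) → g m) (y : Fin (n + 1) → g n) :
    Fin (m + n + 1) → g (m + n) :=
  fun i => ∑ j : Fin (m + 1), ∑ l : Fin (n + 1),
    if (j : ℕ) + (l : ℕ) = (i : ℕ) then br m n (x j) (y l) else 0

section
variable {g : ℕ → Type*}

theorem gcast_ite {a b : ℕ} (h : a = b) (P : Prop) [Decidable P] (x y : g a) :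
    gcast h (if P then x else y) = if P then gcast h x else gcast h y := by subst h; rfl

variable [∀ n, AddCommGroup (g n)]

theorem gcast_zero {a b : ℕ} (h : a = b) : gcast h (0 : g a) = 0 := by subst h; rfl

theorem gcast_sum {a b : ℕ} (h : a = b) {ι : Type*} (s : Finset ι) (f : ι → g a) :
    gcast h (∑ i ∈ s, f i) = ∑ i ∈ s, gcast h (f i) := by subst h; rfl

end

theorem Finset.sum_comm_rotate {M α β γ : Type*} [AddCommMonoid M] [Fintype α] [Fintype β]
    [Fintype γ] (f : α → β → γ → M) :
    ∑ a, ∑ b, ∑ c, f a b c = ∑ c, ∑ a, ∑ b, f a b c := by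
  simp_rw [Finset.sum_comm (γ := γ)]

theorem Fin.sum_ite_and_val_eq {M : Type*} [AddCommMonoid M] {N k : ℕ} (hk : k < N)
    (P : ℕ → Prop) [DecidablePred P] (t : M) :
    ∑ l : Fin N, (if P l ∧ k = l then t else 0) = if P k then t else 0 := by
  rw [Fintype.sum_eq_single ⟨k, hk⟩ fun l hl => if_neg fun h => hl (Fin.ext h.2.symm)]
  simp

section
variable {g : ℕ → Type*} [∀ n, AddCommGroup (g n)] (br : ∀ m n : ℕ, g m → g n → g (m + n))

theorem gcBracket_gcBracket
    (hadd_r : ∀ (m n : ℕ) (x : g m) (y z : g n), br m n x (y + z) = br m n x y + br m n x z)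
    {m n p : ℕ} (x : Fin (m + 1) → g m) (y : Fin (n + 1) → g n) (z : Fin (p + 1) → g p)
    (i : Fin (m + (n + p) + 1)) :
    gcBracket br x (gcBracket br y z) i =
      ∑ j : Fin (m + 1), ∑ a : Fin (n + 1), ∑ b : Fin (p + 1),
        if (j : ℕ) + (a + b) = i then br m (n + p) (x j) (br n p (y a) (z b)) else 0 := by
  let brx (j : Fin (m + 1)) : g (n + p) →+ g (m + (n + p)) :=
    AddMonoidHom.mk' (br m (n + p) (x j)) (hadd_r m (n + p) (x j))
  refine Finset.sum_congr rfl fun j _ => ?_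
  calc ∑ l : Fin (n + p + 1),
        (if (j : ℕ) + l = i then brx j (gcBracket br y z l) else (0 : g (m + (n + p))))
      = ∑ l : Fin (n + p + 1), ∑ a : Fin (n + 1), ∑ b : Fin (p + 1),
          if (j : ℕ) + l = i ∧ (a : ℕ) + b = l then brx j (br n p (y a) (z b)) else 0 := by
        refine Finset.sum_congr rfl fun l _ => ?_
        by_cases hl : (j : ℕ) + l = i
        · simp only [gcBracket, map_sum, apply_ite (brx j), map_zero, ite_and, if_pos hl]
        · simp [hl]
    _ = _ := by
        rw [← Finset.sum_comm_rotate]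
        refine Finset.sum_congr rfl fun a _ => Finset.sum_congr rfl fun b _ => ?_
        exact Fin.sum_ite_and_val_eq (by omega) (fun l => (j : ℕ) + l = i) _

theorem gcBracket_antisymm
    (hanti : ∀ (m n : ℕ) (x : g m) (y : g n),
      br m n x y = -((-1 : ℤ) ^ (m * n) • gcast (Nat.add_comm n m) (br n m y x)))
    {m n : ℕ} (x : Fin (m + 1) → g m) (y : Fin (n + 1) → g n) (i : Fin (m + n + 1)) :
    gcBracket br x y i =
      -((-1 : ℤ) ^ (m * n) • gcast (Nat.add_comm n m) (gcBracket br y x ⟨i, by grind⟩)) := by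
  simp only [gcBracket, gcast_sum, gcast_ite, gcast_zero, Finset.smul_sum, smul_ite, smul_zero,
    ← Finset.sum_neg_distrib, neg_ite, neg_zero]
  rw [Finset.sum_comm]
  refine Finset.sum_congr rfl fun j _ => Finset.sum_congr rfl fun l _ => ?_
  simp only [add_comm (l : ℕ), ← hanti]

theorem gcBracket_jacobi
    (hadd_r : ∀ (m n : ℕ) (x : g m) (y z : g n), br m n x (y + z) = br m n x y + br m n x z)
    (hjac : ∀ (m n p : ℕ) (x : g m) (y : g n) (z : g p),
      (-1 : ℤ) ^ (m * p) • gcast (by grind : m + (n + p) = m + n + p)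
          (br m (n + p) x (br n p y z))
        + (-1 : ℤ) ^ (n * m) • gcast (by grind : n + (p + m) = m + n + p)
          (br n (p + m) y (br p m z x))
        + (-1 : ℤ) ^ (p * n) • gcast (by grind : p + (m + n) = m + n + p)
          (br p (m + n) z (br m n x y)) = 0)
    {m n p : ℕ} (x : Fin (m + 1) → g m) (y : Fin (n + 1) → g n) (z : Fin (p + 1) → g p)
    (i : Fin (m + n + p + 1)) :
    (-1 : ℤ) ^ (m * p) • gcast (by grind : m + (n + p) = m + n + p)
        (gcBracket br x (gcBracket br y z) ⟨i, by grind⟩)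
      + (-1 : ℤ) ^ (n * m) • gcast (by grind : n + (p + m) = m + n + p)
        (gcBracket br y (gcBracket br z x) ⟨i, by grind⟩)
      + (-1 : ℤ) ^ (p * n) • gcast (by grind : p + (m + n) = m + n + p)
        (gcBracket br z (gcBracket br x y) ⟨i, by grind⟩) = 0 := by
  simp only [gcBracket_gcBracket br hadd_r, gcast_sum, gcast_ite, gcast_zero, Finset.smul_sum,
    smul_ite, smul_zero]
  rw [Finset.sum_comm_rotate (fun (b : Fin (n + 1)) (c : Fin (p + 1)) (a : Fin (m + 1)) => _),
    ← Finset.sum_comm_rotate (fun (a : Fin (m + 1)) (b : Fin (n + 1)) (c : Fin (p + 1)) => _)]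
  simp only [← Finset.sum_add_distrib]
  refine Finset.sum_eq_zero fun a _ =>
    Finset.sum_eq_zero fun b _ => Finset.sum_eq_zero fun c _ => ?_
  have hbca : (b : ℕ) + (c + a) = i ↔ (a : ℕ) + (b + c) = i := by omega
  have hcab : (c : ℕ) + (a + b) = i ↔ (a : ℕ) + (b + c) = i := by omega
  simp only [hbca, hcab]
  split_ifs
  · exact hjac m n p (x a) (y b) (z c)
  · simp

end

/-- if `(g, [·,·])` is a graded Lie algebra (concentrated in nonnegative
degrees), then `(g_c, ⟦·,·⟧)` is again a graded Lie algebra: the bracket `⟦·,·⟧` satisfies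
graded antisymmetry and the graded Jacobi identity. -/
theorem gc_is_graded_lie {g : ℕ → Type*} [∀ n, AddCommGroup (g n)]
    (br : ∀ m n : ℕ, g m → g n → g (m + n))
    (hadd_r : ∀ (m n : ℕ) (x : g m) (y z : g n),
      br m n x (y + z) = br m n x y + br m n x z)
    (hanti : ∀ (m n : ℕ) (x : g m) (y : g n),
      br m n x y = -((-1 : ℤ) ^ (m * n) • gcast (Nat.add_comm n m) (br n m y x)))
    (hjac : ∀ (m n p : ℕ) (x : g m) (y : g n) (z : g p),
      (-1 : ℤ) ^ (m * p) • gcast (by omega : m + (n + p) = m + n + p)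
          (br m (n + p) x (br n p y z))
        + (-1 : ℤ) ^ (n * m) • gcast (by omega : n + (p + m) = m + n + p)
          (br n (p + m) y (br p m z x))
        + (-1 : ℤ) ^ (p * n) • gcast (by omega : p + (m + n) = m + n + p)
          (br p (m + n) z (br m n x y)) = 0) :
    -- graded antisymmetry of ⟦·,·⟧
    (∀ (m n : ℕ) (x : Fin (m + 1) → g m) (y : Fin (n + 1) → g n) (i : Fin (m + n + 1)),
      gcBracket br x y i =
        -((-1 : ℤ) ^ (m * n) • gcast (Nat.add_comm n m)
          (gcBracket br y x ⟨(i : ℕ), by omega⟩))) ∧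
    -- graded Jacobi identity of ⟦·,·⟧
    (∀ (m n p : ℕ) (x : Fin (m + 1) → g m) (y : Fin (n + 1) → g n) (z : Fin (p + 1) → g p)
        (i : Fin (m + n + p + 1)),
      (-1 : ℤ) ^ (m * p) • gcast (by omega : m + (n + p) = m + n + p)
          (gcBracket br x (gcBracket br y z) ⟨(i : ℕ), by omega⟩)
        + (-1 : ℤ) ^ (n * m) • gcast (by omega : n + (p + m) = m + n + p)
          (gcBracket br y (gcBracket br z x) ⟨(i : ℕ), by omega⟩)
        + (-1 : ℤ) ^ (p * n) • gcast (by omega : p + (m + n) = m + n + p)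
          (gcBracket br z (gcBracket br x y) ⟨(i : ℕ), by omega⟩) = 0) := by
  exact ⟨fun _ _ => gcBracket_antisymm br hanti,
    fun _ _ _ => gcBracket_jacobi br hadd_r hjac⟩
end

section
/- Let (D, ≺₁, ≻₁, ≺₂, ≻₂) be a quintuple where (D,≺₁,≻₁) and (D,≺₂,≻₂) are dendriform algebras. Then the three compatibility conditions hold if and only if for all scalars λ, η, the pair (λ≺₁ + η≺₂, λ≻₁ + η≻₂) is a dendriform algebra structure on D. -/
/-!
Let `Φ(A, B)` be the differences of the two sides of the three dendriform axioms, with the outer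
operations taken from `A = (≺, ≻)` and the inner ones from `B`. It is bilinear in `(A, B)`; the
axioms for `A` say `Φ(A, A) = 0` and the compatibility conditions say `Φ(A, B) + Φ(B, A) = 0`.
Since `Φ(λA + ηB, λA + ηB) = λ² Φ(A, A) + λη (Φ(A, B) + Φ(B, A)) + η² Φ(B, B)`, for dendriform
`A` and `B` every combination is dendriform iff the mixed term vanishes; `λ = η = 1` alone
already forces that.
-/

/-- Dendriform algebra axioms for a pair `(≺, ≻)` of operations. -/
def IsDendriform {D : Type*} [AddCommMonoid D] (p s : D → D → D) : Prop :=
  (∀ x y z : D, p (p x y) z = p x (p y z + s y z)) ∧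
  (∀ x y z : D, p (s x y) z = s x (p y z)) ∧
  (∀ x y z : D, s (p x y + s x y) z = s x (s y z))

/-- Compatibility conditions for a pair of dendriform structures. -/
def DendCompat {D : Type*} [AddCommMonoid D] (p₁ s₁ p₂ s₂ : D → D → D) : Prop :=
  (∀ x y z : D, p₂ (p₁ x y) z + p₁ (p₂ x y) z =
    p₂ x (p₁ y z + s₁ y z) + p₁ x (p₂ y z + s₂ y z)) ∧
  (∀ x y z : D, p₂ (s₁ x y) z + p₁ (s₂ x y) z = s₂ x (p₁ y z) + s₁ x (p₂ y z)) ∧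
  (∀ x y z : D, s₂ (p₁ x y + s₁ x y) z + s₁ (p₂ x y + s₂ x y) z =
    s₂ x (s₁ y z) + s₁ x (s₂ y z))

theorem LinearMap.apply_smul_add_smul_self {R M N : Type*} [CommSemiring R] [AddCommMonoid M]
    [AddCommMonoid N] [Module R M] [Module R N] (Φ : M →ₗ[R] M →ₗ[R] N) (a b : M) (r s : R) :
    Φ (r • a + s • b) (r • a + s • b) =
      (r * r) • Φ a a + (r * s) • (Φ a b + Φ b a) + (s * s) • Φ b b := by
  simp only [map_add, map_smul, LinearMap.add_apply, LinearMap.smul_apply]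
  module

theorem LinearMap.forall_apply_smul_add_smul_self_eq_zero_iff {R M N : Type*} [CommSemiring R]
    [AddCommMonoid M] [AddCommMonoid N] [Module R M] [Module R N] (Φ : M →ₗ[R] M →ₗ[R] N)
    {a b : M} (ha : Φ a a = 0) (hb : Φ b b = 0) :
    (∀ r s : R, Φ (r • a + s • b) (r • a + s • b) = 0) ↔ Φ a b + Φ b a = 0 := by
  simp only [Φ.apply_smul_add_smul_self, ha, hb, smul_zero, zero_add, add_zero]
  exact ⟨fun h => by simpa using h 1 1, fun h r s => by rw [h, smul_zero]⟩

section Dendriform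

variable {k D : Type*} [CommSemiring k] [AddCommGroup D] [Module k D]

def dendriformDefect (x y z : D) :
    (D →ₗ[k] D →ₗ[k] D) × (D →ₗ[k] D →ₗ[k] D) →ₗ[k]
      (D →ₗ[k] D →ₗ[k] D) × (D →ₗ[k] D →ₗ[k] D) →ₗ[k] D × D × D :=
  LinearMap.mk₂ k
    (fun A B => (A.1 (B.1 x y) z - A.1 x (B.1 y z + B.2 y z),
      A.1 (B.2 x y) z - A.2 x (B.1 y z),
      A.2 (B.1 x y + B.2 x y) z - A.2 x (B.2 y z)))
    (by intros; ext <;> simp only [Prod.fst_add, Prod.snd_add, LinearMap.add_apply, map_add] <;> abel)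
    (by intros; ext <;> simp only [Prod.smul_fst, Prod.smul_snd, LinearMap.smul_apply, smul_sub])
    (by intros; ext <;> simp only [Prod.fst_add, Prod.snd_add, map_add, LinearMap.add_apply] <;> abel)
    (by
      intros; ext <;> simp only [Prod.smul_fst, Prod.smul_snd, map_add, map_smul,
        LinearMap.add_apply, LinearMap.smul_apply, smul_sub, smul_add])

theorem isDendriform_iff_dendriformDefect_eq_zero (p s : D →ₗ[k] D →ₗ[k] D) :
    IsDendriform (fun x y => p x y) (fun x y => s x y) ↔
      ∀ x y z : D, dendriformDefect x y z (p, s) (p, s) = 0 := by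
  simp [IsDendriform, dendriformDefect, Prod.ext_iff, sub_eq_zero, forall_and]

theorem dendCompat_iff_dendriformDefect_add_eq_zero (p₁ s₁ p₂ s₂ : D →ₗ[k] D →ₗ[k] D) :
    DendCompat (fun x y => p₁ x y) (fun x y => s₁ x y) (fun x y => p₂ x y) (fun x y => s₂ x y) ↔
      ∀ x y z : D, dendriformDefect x y z (p₁, s₁) (p₂, s₂) +
        dendriformDefect x y z (p₂, s₂) (p₁, s₁) = 0 := by
  simp only [DendCompat, dendriformDefect, LinearMap.mk₂_apply, Prod.mk_add_mk, Prod.ext_iff,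
    Prod.fst_zero, Prod.snd_zero, forall_and, sub_add_sub_comm, sub_eq_zero]
  refine and_congr (forall₃_congr fun x y z => ?_) (and_congr (forall₃_congr fun x y z => ?_)
    (forall₃_congr fun x y z => ?_)) <;> abel_nf

end Dendriform

/-- given two dendriform structures `(≺₁,≻₁)` and `(≺₂,≻₂)` (as bilinear
operations) on `D`, the three compatibility conditions hold iff every linear combination
`(λ≺₁ + η≺₂, λ≻₁ + η≻₂)` is a dendriform structure. -/
theorem dendCompat_iff_all_linear_combinations_dendriform {k D : Type*} [CommRing k]
    [AddCommGroup D] [Module k D]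
    (p₁ s₁ p₂ s₂ : D →ₗ[k] D →ₗ[k] D)
    (h₁ : IsDendriform (fun x y => p₁ x y) (fun x y => s₁ x y))
    (h₂ : IsDendriform (fun x y => p₂ x y) (fun x y => s₂ x y)) :
    DendCompat (fun x y => p₁ x y) (fun x y => s₁ x y)
        (fun x y => p₂ x y) (fun x y => s₂ x y) ↔
      ∀ lam eta : k,
        IsDendriform (fun x y => lam • p₁ x y + eta • p₂ x y)
          (fun x y => lam • s₁ x y + eta • s₂ x y) := by
  rw [isDendriform_iff_dendriformDefect_eq_zero] at h₁ h₂
  have combination (lam eta : k) :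
      IsDendriform (fun x y => lam • p₁ x y + eta • p₂ x y)
          (fun x y => lam • s₁ x y + eta • s₂ x y) ↔
        ∀ x y z : D, dendriformDefect x y z (lam • (p₁, s₁) + eta • (p₂, s₂))
          (lam • (p₁, s₁) + eta • (p₂, s₂)) = 0 :=
    isDendriform_iff_dendriformDefect_eq_zero (lam • p₁ + eta • p₂) (lam • s₁ + eta • s₂)
  simp only [combination, dendCompat_iff_dendriformDefect_add_eq_zero]
  constructor
  · intro h lam eta x y z
    exact ((dendriformDefect x y z).forall_apply_smul_add_smul_self_eq_zero_iff
      (h₁ x y z) (h₂ x y z)).2 (h x y z) lam eta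
  · intro h x y z
    exact ((dendriformDefect x y z).forall_apply_smul_add_smul_self_eq_zero_iff
      (h₁ x y z) (h₂ x y z)).1 fun lam eta => h lam eta x y z
end

section
/- Let (D, ≺₁, ≻₁, ≺₂, ≻₂) be a compatible dendriform algebra. Define x ◇₁ y = x ≻₁ y − y ≺₁ x and x ◇₂ y = x ≻₂ y − y ≺₂ x. Then (D, ◇₁, ◇₂) is a compatible pre-Lie algebra: each ◇ᵢ is a left pre-Lie product, and (x◇₁y)◇₂z + (x◇₂y)◇₁z − x◇₂(y◇₁z) − x◇₁(y◇₂z) = (y◇₁x)◇₂z + (y◇₂x)◇₁z − y◇₂(x◇₁z) − y◇₁(x◇₂z). -/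
/-- An operation is additive in both arguments. -/
def Biadditive {D : Type*} [AddCommMonoid D] (f : D → D → D) : Prop :=
  (∀ x y z : D, f (x + y) z = f x z + f y z) ∧ (∀ x y z : D, f x (y + z) = f x y + f x z)

/-- The left pre-Lie identity. -/
def IsPreLie {D : Type*} [AddCommGroup D] (d : D → D → D) : Prop :=
  ∀ x y z : D, d (d x y) z - d x (d y z) = d (d y x) z - d y (d x z)

namespace Biadditive

variable {D : Type*} [AddCommGroup D] {f g : D → D → D}

theorem map_sub_left (hf : Biadditive f) (x y z : D) : f (x - y) z = f x z - f y z :=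
  eq_sub_of_add_eq (by rw [← hf.1, sub_add_cancel])

theorem map_sub_right (hf : Biadditive f) (x y z : D) : f x (y - z) = f x y - f x z :=
  eq_sub_of_add_eq (by rw [← hf.2, sub_add_cancel])

theorem add (hf : Biadditive f) (hg : Biadditive g) : Biadditive (f + g) :=
  ⟨fun x y z => by simp only [Pi.add_apply, hf.1, hg.1]; abel,
    fun x y z => by simp only [Pi.add_apply, hf.2, hg.2]; abel⟩

theorem sub (hf : Biadditive f) (hg : Biadditive g) : Biadditive (f - g) :=
  ⟨fun x y z => by simp only [Pi.sub_apply, hf.1, hg.1]; abel,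
    fun x y z => by simp only [Pi.sub_apply, hf.2, hg.2]; abel⟩

theorem swap (hf : Biadditive f) : Biadditive (fun x y => f y x) :=
  ⟨fun x y z => hf.2 z x y, fun x y z => hf.1 y z x⟩

end Biadditive

/-- The pre-Lie product `x ◇ y = x ≻ y − y ≺ x` of a dendriform structure `(≺, ≻) = (p, s)`. -/
def dendriformPreLie {D : Type*} [AddCommGroup D] (p s : D → D → D) : D → D → D :=
  fun x y => s x y - p y x

theorem Biadditive.dendriformPreLie {D : Type*} [AddCommGroup D] {p s : D → D → D}
    (hp : Biadditive p) (hs : Biadditive s) : Biadditive (dendriformPreLie p s) :=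
  hs.sub hp.swap

theorem IsDendriform.isPreLie {D : Type*} [AddCommGroup D] {p s : D → D → D}
    (hp : Biadditive p) (hs : Biadditive s) (h : IsDendriform p s) :
    IsPreLie (dendriformPreLie p s) := by
  intro x y z
  simp only [dendriformPreLie, hp.map_sub_left, hp.map_sub_right, hs.map_sub_left,
    hs.map_sub_right]
  have hxy : s x (s y z) = s (p x y) z + s (s x y) z := by rw [← h.2.2, hs.1]
  have hyx : s y (s x z) = s (p y x) z + s (s y x) z := by rw [← h.2.2, hs.1]
  have hzyx : p (p z y) x = p z (p y x) + p z (s y x) := by rw [h.1, hp.2]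
  have hzxy : p (p z x) y = p z (p x y) + p z (s x y) := by rw [h.1, hp.2]
  rw [hxy, hyx, hzyx, hzxy, h.2.1 y z x, h.2.1 x z y]
  abel

theorem IsDendriform.add_of_dendCompat {D : Type*} [AddCommGroup D] {p₁ s₁ p₂ s₂ : D → D → D}
    (hp₁ : Biadditive p₁) (hs₁ : Biadditive s₁) (hp₂ : Biadditive p₂) (hs₂ : Biadditive s₂)
    (h₁ : IsDendriform p₁ s₁) (h₂ : IsDendriform p₂ s₂) (hc : DendCompat p₁ s₁ p₂ s₂) :
    IsDendriform (p₁ + p₂) (s₁ + s₂) := by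
  simp only [IsDendriform, DendCompat, Pi.add_apply, hp₁.1, hp₁.2, hs₁.1, hs₁.2, hp₂.1, hp₂.2,
    hs₂.1, hs₂.2] at h₁ h₂ hc ⊢
  refine ⟨fun x y z => ?_, fun x y z => ?_, fun x y z => ?_⟩
  · linear_combination (norm := module) h₁.1 x y z + h₂.1 x y z + hc.1 x y z
  · linear_combination (norm := module) h₁.2.1 x y z + h₂.2.1 x y z + hc.2.1 x y z
  · linear_combination (norm := module) h₁.2.2 x y z + h₂.2.2 x y z + hc.2.2 x y z

theorem dendriformPreLie_add {D : Type*} [AddCommGroup D] (p₁ s₁ p₂ s₂ : D → D → D) :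
    dendriformPreLie (p₁ + p₂) (s₁ + s₂) = dendriformPreLie p₁ s₁ + dendriformPreLie p₂ s₂ := by
  funext x y
  simp only [dendriformPreLie, Pi.add_apply]
  abel

theorem IsPreLie.mixed_of_add {D : Type*} [AddCommGroup D] {d₁ d₂ : D → D → D}
    (hd₁ : Biadditive d₁) (hd₂ : Biadditive d₂) (h₁ : IsPreLie d₁) (h₂ : IsPreLie d₂)
    (h : IsPreLie (d₁ + d₂)) (x y z : D) :
    d₂ (d₁ x y) z + d₁ (d₂ x y) z - d₂ x (d₁ y z) - d₁ x (d₂ y z) =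
      d₂ (d₁ y x) z + d₁ (d₂ y x) z - d₂ y (d₁ x z) - d₁ y (d₂ x z) := by
  have hsum := h x y z
  simp only [Pi.add_apply, hd₁.1, hd₁.2, hd₂.1, hd₂.2] at hsum
  linear_combination (norm := module) hsum - h₁ x y z - h₂ x y z

/-- a compatible dendriform algebra gives a compatible pre-Lie algebra via
`x ◇ᵢ y = x ≻ᵢ y − y ≺ᵢ x`. -/
theorem compatible_dendriform_gives_compatible_preLie {D : Type*} [AddCommGroup D]
    (p₁ s₁ p₂ s₂ : D → D → D)
    (hp₁ : Biadditive p₁) (hs₁ : Biadditive s₁) (hp₂ : Biadditive p₂) (hs₂ : Biadditive s₂)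
    (h₁ : IsDendriform p₁ s₁) (h₂ : IsDendriform p₂ s₂)
    (hc : DendCompat p₁ s₁ p₂ s₂) :
    IsPreLie (fun x y => s₁ x y - p₁ y x) ∧
    IsPreLie (fun x y => s₂ x y - p₂ y x) ∧
    (∀ x y z : D,
      (fun x y => s₂ x y - p₂ y x) ((fun x y => s₁ x y - p₁ y x) x y) z
        + (fun x y => s₁ x y - p₁ y x) ((fun x y => s₂ x y - p₂ y x) x y) z
        - (fun x y => s₂ x y - p₂ y x) x ((fun x y => s₁ x y - p₁ y x) y z)
        - (fun x y => s₁ x y - p₁ y x) x ((fun x y => s₂ x y - p₂ y x) y z) =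
      (fun x y => s₂ x y - p₂ y x) ((fun x y => s₁ x y - p₁ y x) y x) z
        + (fun x y => s₁ x y - p₁ y x) ((fun x y => s₂ x y - p₂ y x) y x) z
        - (fun x y => s₂ x y - p₂ y x) y ((fun x y => s₁ x y - p₁ y x) x z)
        - (fun x y => s₁ x y - p₁ y x) y ((fun x y => s₂ x y - p₂ y x) x z)) := by
  have hpre₁ := h₁.isPreLie hp₁ hs₁
  have hpre₂ := h₂.isPreLie hp₂ hs₂
  have hpre : IsPreLie (dendriformPreLie p₁ s₁ + dendriformPreLie p₂ s₂) := by
    rw [← dendriformPreLie_add]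
    exact (h₁.add_of_dendCompat hp₁ hs₁ hp₂ hs₂ h₂ hc).isPreLie (hp₁.add hp₂) (hs₁.add hs₂)
  exact ⟨hpre₁, hpre₂,
    hpre₁.mixed_of_add (hp₁.dendriformPreLie hs₁) (hp₂.dendriformPreLie hs₂) hpre₂ hpre⟩
end

section
/- Let A be an associative algebra, M an A-bimodule, and (T₁, T₂) a compatible O-operator. Define u ≺_{Tᵢ} v = u·Tᵢ(v) and u ≻_{Tᵢ} v = Tᵢ(u)·v. Then (M, ≺_{T₁}, ≻_{T₁}, ≺_{T₂}, ≻_{T₂}) is a compatible dendriform algebra. -/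
open MulOpposite

/-! Each dendriform or compatibility axiom is the corresponding `𝒪`-operator identity acted
on `M` through associativity of the bimodule action (`mul_smul`, with `op (a * b) = op b * op a`
on the right); the middle axioms are just the commutation of the left and right actions. -/

section

variable {k A M : Type*} [CommRing k] [Ring A] [Algebra k A] [AddCommGroup M] [Module k M]
  [Module A M] [Module Aᵐᵒᵖ M] [SMulCommClass A Aᵐᵒᵖ M]

theorem IsOOperator.isDendriform {T : M →ₗ[k] A} (h : IsOOperator T) :
    IsDendriform (fun u v : M => op (T v) • u) (fun u v : M => T u • v) := by
  refine ⟨fun x y z => ?_, fun x y z => (smul_comm (T x) (op (T z)) y).symm, fun x y z => ?_⟩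
  · change op (T z) • op (T y) • x = op (T (op (T z) • y + T y • z)) • x
    rw [smul_smul, ← op_mul, h, add_comm]
  · change T (op (T y) • x + T x • y) • z = T x • T y • z
    rw [add_comm, ← h, mul_smul]

theorem OOperatorCompat.dendCompat {T₁ T₂ : M →ₗ[k] A} (hc : OOperatorCompat T₁ T₂) :
    DendCompat (fun u v : M => op (T₁ v) • u) (fun u v : M => T₁ u • v)
      (fun u v : M => op (T₂ v) • u) (fun u v : M => T₂ u • v) := by
  refine ⟨fun x y z => ?_, fun x y z => ?_, fun x y z => ?_⟩
  · change op (T₂ z) • op (T₁ y) • x + op (T₁ z) • op (T₂ y) • x =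
      op (T₂ (op (T₁ z) • y + T₁ y • z)) • x + op (T₁ (op (T₂ z) • y + T₂ y • z)) • x
    rw [smul_smul, smul_smul, ← op_mul, ← op_mul, ← add_smul, ← op_add, hc, ← add_smul, ← op_add,
      add_comm (op (T₁ z) • y), add_comm (op (T₂ z) • y), add_comm (T₂ _)]
  · change op (T₂ z) • T₁ x • y + op (T₁ z) • T₂ x • y =
      T₂ x • op (T₁ z) • y + T₁ x • op (T₂ z) • y
    rw [smul_comm (T₁ x), smul_comm (T₂ x), add_comm]
  · change T₂ (op (T₁ y) • x + T₁ x • y) • z + T₁ (op (T₂ y) • x + T₂ x • y) • z =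
      T₂ x • T₁ y • z + T₁ x • T₂ y • z
    rw [← add_smul, add_comm (op (T₁ y) • x), add_comm (op (T₂ y) • x), add_comm (T₂ _), ← hc,
      add_smul, mul_smul, mul_smul, add_comm]

end

/-- a compatible `𝒪`-operator `(T₁, T₂)` induces a compatible dendriform
algebra structure on `M` via `u ≺_{Tᵢ} v = u · Tᵢ v` and `u ≻_{Tᵢ} v = Tᵢ u · v`. -/
theorem compatible_oOperator_induces_compatible_dendriform {k A M : Type*} [CommRing k]
    [Ring A] [Algebra k A] [AddCommGroup M] [Module k M] [Module A M] [Module Aᵐᵒᵖ M]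
    [SMulCommClass A Aᵐᵒᵖ M]
    (T₁ T₂ : M →ₗ[k] A) (h₁ : IsOOperator T₁) (h₂ : IsOOperator T₂)
    (hc : OOperatorCompat T₁ T₂) :
    IsDendriform (fun u v : M => op (T₁ v) • u) (fun u v : M => T₁ u • v) ∧
    IsDendriform (fun u v : M => op (T₂ v) • u) (fun u v : M => T₂ u • v) ∧
    DendCompat (fun u v : M => op (T₁ v) • u) (fun u v : M => T₁ u • v)
      (fun u v : M => op (T₂ v) • u) (fun u v : M => T₂ u • v) :=
  ⟨h₁.isDendriform, h₂.isDendriform, hc.dendCompat⟩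
end
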